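/- Let p(z) = 1 + c₁z + c₂z² + ⋯ be analytic on the unit disc with Re(p(z)) > 0, and let 0 < v ≤ 1/2. Then |c₂ - v c₁²| + v|c₁|² ≤ 2. -/

import Mathlib

/-!
The Cayley transform `ω = (P - 1) / (P + 1)` maps the unit disc into itself and fixes `0`, so by
the Schwarz lemma `g = ω(z) / z` maps the disc into its closure. Schwarz–Pick for `g` at the
origin, `|g'(0)| ≤ 1 - |g(0)|²`, together with `g(0) = c₁ / 2` and `g'(0) = (c₂ - c₁² / 2) / 2`,
is the refined Carathéodory bound `|c₂ - c₁² / 2| ≤ 2 - |c₁|² / 2`. For `v ≤ 1 / 2` the claim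
follows by the triangle inequality from `c₂ - v c₁² = (c₂ - c₁² / 2) + (1 / 2 - v) c₁²`.
-/

open Metric Set Filter Topology ComplexConjugate Complex

theorem normSq_one_sub_conj_mul_sub_normSq_sub (a w : ℂ) :
    normSq (1 - conj a * w) - normSq (w - a) = (1 - normSq a) * (1 - normSq w) := by
  simp only [normSq_apply, sub_re, sub_im, mul_re, mul_im, one_re, one_im, conj_re, conj_im]
  ring

theorem norm_sub_lt_norm_one_sub_conj_mul {a w : ℂ} (ha : ‖a‖ < 1) (hw : ‖w‖ < 1) :
    ‖w - a‖ < ‖1 - conj a * w‖ := by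
  have ha' : normSq a < 1 := by
    rw [← Complex.sq_norm]; exact pow_lt_one₀ (norm_nonneg a) ha two_ne_zero
  have hw' : normSq w < 1 := by
    rw [← Complex.sq_norm]; exact pow_lt_one₀ (norm_nonneg w) hw two_ne_zero
  rw [← sq_lt_sq₀ (norm_nonneg _) (norm_nonneg _), Complex.sq_norm, Complex.sq_norm, ← sub_pos,
    normSq_one_sub_conj_mul_sub_normSq_sub]
  exact mul_pos (sub_pos.2 ha') (sub_pos.2 hw')

theorem norm_sub_one_lt_norm_add_one {w : ℂ} (hw : 0 < w.re) : ‖w - 1‖ < ‖w + 1‖ := by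
  rw [← sq_lt_sq₀ (norm_nonneg _) (norm_nonneg _), Complex.sq_norm, Complex.sq_norm]
  simp only [normSq_apply, sub_re, sub_im, add_re, add_im, one_re, one_im]
  nlinarith

theorem norm_deriv_le_one_sub_sq_of_mapsTo_ball {g : ℂ → ℂ}
    (hd : DifferentiableOn ℂ g (ball 0 1)) (hmaps : MapsTo g (ball 0 1) (ball 0 1)) :
    ‖deriv g 0‖ ≤ 1 - ‖g 0‖ ^ 2 := by
  have h0 : (0 : ℂ) ∈ ball (0 : ℂ) 1 := mem_ball_self one_pos
  set a := g 0
  have ha : ‖a‖ < 1 := mem_ball_zero_iff.1 (hmaps h0)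
  have hden : ∀ z ∈ ball (0 : ℂ) 1, 1 - conj a * g z ≠ 0 := fun z hz => by
    refine sub_ne_zero.2 fun h => ?_
    have : ‖conj a * g z‖ < 1 := by
      rw [norm_mul, norm_conj]
      exact mul_lt_one_of_nonneg_of_lt_one_left (norm_nonneg a) ha
        (mem_ball_zero_iff.1 (hmaps hz)).le
    rw [← h, norm_one] at this
    exact this.false
  -- the disc automorphism moving `a` to `0`, composed with `g`, is subject to the Schwarz lemma
  set h := fun z => (g z - a) / (1 - conj a * g z)
  have hd' : DifferentiableOn ℂ h (ball 0 1) :=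
    (hd.sub_const a).div ((differentiableOn_const 1).sub (hd.const_mul _)) hden
  have hmaps' : MapsTo h (ball 0 1) (closedBall (h 0) 1) := fun z hz => by
    simp only [h, a, sub_self, zero_div, mem_closedBall_zero_iff, norm_div]
    exact div_le_one_of_le₀
      (norm_sub_lt_norm_one_sub_conj_mul ha (mem_ball_zero_iff.1 (hmaps hz))).le (norm_nonneg _)
  have hga : HasDerivAt g (deriv g 0) 0 :=
    (hd.differentiableAt (isOpen_ball.mem_nhds h0)).hasDerivAt
  have hderiv : HasDerivAt h (deriv g 0 / (1 - conj a * a)) 0 := by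
    refine ((hga.sub_const a).fun_div ((hga.const_mul (conj a)).const_sub 1)
      (hden 0 h0)).congr_deriv ?_
    change (_ * (1 - conj a * a) - (a - a) * _) / (1 - conj a * a) ^ 2 = _
    rw [sub_self, zero_mul, sub_zero, sq, mul_div_mul_right _ _ (hden 0 h0)]
  have hnorm : ‖1 - conj a * a‖ = 1 - ‖a‖ ^ 2 := by
    rw [mul_comm, mul_conj, ← ofReal_one, ← ofReal_sub, norm_real, ← Complex.sq_norm,
      Real.norm_of_nonneg (by nlinarith [norm_nonneg a])]
  have := norm_deriv_le_one_of_mapsTo_ball hd' hmaps' one_pos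
  rwa [hderiv.deriv, norm_div, hnorm, div_le_one (by nlinarith [norm_nonneg a])] at this

theorem norm_deriv_le_one_sub_sq_of_mapsTo_closedBall {g : ℂ → ℂ}
    (hd : DifferentiableOn ℂ g (ball 0 1)) (hmaps : MapsTo g (ball 0 1) (closedBall 0 1)) :
    ‖deriv g 0‖ ≤ 1 - ‖g 0‖ ^ 2 := by
  have h0 : (0 : ℂ) ∈ ball (0 : ℂ) 1 := mem_ball_self one_pos
  by_cases hball : MapsTo g (ball 0 1) (ball 0 1)
  · exact norm_deriv_le_one_sub_sq_of_mapsTo_ball hd hball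
  obtain ⟨z₀, hz₀, hgz₀⟩ : ∃ z₀ ∈ ball (0 : ℂ) 1, 1 ≤ ‖g z₀‖ := by
    simpa [MapsTo] using hball
  have hmax : IsMaxOn (norm ∘ g) (ball 0 1) z₀ := fun z hz =>
    (mem_closedBall_zero_iff.1 (hmaps hz)).trans hgz₀
  have hconst : g =ᶠ[𝓝 0] fun _ => g z₀ := eventuallyEq_of_mem (isOpen_ball.mem_nhds h0)
    (eqOn_of_isPreconnected_of_isMaxOn_norm (convex_ball 0 1).isPreconnected isOpen_ball hd hz₀
      hmax)
  rw [hconst.deriv_eq, deriv_const, norm_zero, sub_nonneg]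
  exact pow_le_one₀ (norm_nonneg _) (mem_closedBall_zero_iff.1 (hmaps h0))

theorem iteratedDeriv_two_eq_two_smul_deriv_dslope {E : Type*} [NormedAddCommGroup E]
    [NormedSpace ℂ E] [CompleteSpace E] {f : ℂ → E} {s : Set ℂ} {a : ℂ} (hs : IsOpen s)
    (ha : a ∈ s) (hf : DifferentiableOn ℂ f s) :
    iteratedDeriv 2 f a = (2 : ℂ) • deriv (dslope f a) a := by
  set g := dslope f a
  have hg : DifferentiableOn ℂ g s := (Complex.differentiableOn_dslope (hs.mem_nhds ha)).2 hf
  have hf_eq : f = fun z => f a + (z - a) • g z := funext fun z => by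
    rw [sub_smul_dslope, add_sub_cancel]
  have hderiv : ∀ z ∈ s, deriv f z = g z + (z - a) • deriv g z := fun z hz => by
    have hgz := (hg.differentiableAt (hs.mem_nhds hz)).hasDerivAt
    rw [hf_eq, ((((hasDerivAt_id' z).sub_const a).fun_smul hgz).const_add (f a)).deriv, one_smul,
      add_comm]
  have hga := (hg.differentiableAt (hs.mem_nhds ha)).hasDerivAt
  have hg'a := ((hg.deriv hs).differentiableAt (hs.mem_nhds ha)).hasDerivAt
  rw [iteratedDeriv_succ, iteratedDeriv_one,
    (eventuallyEq_of_mem (hs.mem_nhds ha) hderiv).deriv_eq,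
    (hga.fun_add (((hasDerivAt_id' a).sub_const a).fun_smul hg'a)).deriv]
  simp [two_smul]

theorem hasDerivAt_sub_one_div_add_one {P : ℂ → ℂ} {P' z : ℂ} (hP : HasDerivAt P P' z)
    (hz : P z + 1 ≠ 0) :
    HasDerivAt (fun w => (P w - 1) / (P w + 1)) (2 * P' / (P z + 1) ^ 2) z := by
  refine ((hP.sub_const 1).fun_div (hP.add_const 1) hz).congr_deriv ?_
  ring

theorem iteratedDeriv_two_sub_one_div_add_one {P : ℂ → ℂ} {s : Set ℂ} {a : ℂ} (hs : IsOpen s)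
    (ha : a ∈ s) (hP : DifferentiableOn ℂ P s) (hne : ∀ z ∈ s, P z + 1 ≠ 0) (hPa : P a = 1) :
    iteratedDeriv 2 (fun w => (P w - 1) / (P w + 1)) a =
      iteratedDeriv 2 P a / 2 - deriv P a ^ 2 / 2 := by
  have hderiv : ∀ z ∈ s, deriv (fun w => (P w - 1) / (P w + 1)) z =
      2 * deriv P z / (P z + 1) ^ 2 := fun z hz =>
    (hasDerivAt_sub_one_div_add_one (hP.differentiableAt (hs.mem_nhds hz)).hasDerivAt
      (hne z hz)).deriv
  have hPa' := (hP.differentiableAt (hs.mem_nhds ha)).hasDerivAt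
  have hP'a := ((hP.deriv hs).differentiableAt (hs.mem_nhds ha)).hasDerivAt
  rw [iteratedDeriv_succ, iteratedDeriv_one, iteratedDeriv_succ, iteratedDeriv_one,
    (eventuallyEq_of_mem (hs.mem_nhds ha) hderiv).deriv_eq,
    ((hP'a.const_mul 2).fun_div ((hPa'.add_const 1).fun_pow 2) (pow_ne_zero 2 (hne a ha))).deriv,
    hPa]
  ring

theorem norm_iteratedDeriv_two_div_two_sub_le_of_re_pos {P : ℂ → ℂ}
    (hd : DifferentiableOn ℂ P (ball 0 1)) (hP0 : P 0 = 1)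
    (hre : ∀ z ∈ ball (0 : ℂ) 1, 0 < (P z).re) :
    ‖iteratedDeriv 2 P 0 / 2 - deriv P 0 ^ 2 / 2‖ ≤ 2 - ‖deriv P 0‖ ^ 2 / 2 := by
  have h0 : (0 : ℂ) ∈ ball (0 : ℂ) 1 := mem_ball_self one_pos
  have hne : ∀ z ∈ ball (0 : ℂ) 1, P z + 1 ≠ 0 := fun z hz h => by
    have := congrArg re h
    simp only [add_re, one_re, zero_re] at this
    linarith [hre z hz]
  set ω := fun z => (P z - 1) / (P z + 1)
  have hωd : DifferentiableOn ℂ ω (ball 0 1) := (hd.sub_const 1).div (hd.add_const 1) hne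
  have hωmaps : MapsTo ω (ball 0 1) (closedBall (ω 0) 1) := fun z hz => by
    simp only [ω, hP0, sub_self, zero_div, mem_closedBall_zero_iff, norm_div]
    exact div_le_one_of_le₀ (norm_sub_one_lt_norm_add_one (hre z hz)).le (norm_nonneg _)
  set g := dslope ω 0
  have hgd : DifferentiableOn ℂ g (ball 0 1) :=
    (Complex.differentiableOn_dslope (isOpen_ball.mem_nhds h0)).2 hωd
  have hgmaps : MapsTo g (ball 0 1) (closedBall 0 1) := fun z hz => by
    simpa using norm_dslope_le_div_of_mapsTo_ball hωd hωmaps hz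
  have hg0 : g 0 = deriv P 0 / 2 := by
    rw [show g 0 = deriv ω 0 from dslope_same ω 0, (hasDerivAt_sub_one_div_add_one
      (hd.differentiableAt (isOpen_ball.mem_nhds h0)).hasDerivAt (hne 0 h0)).deriv, hP0]
    ring
  have hg'0 : deriv g 0 = (iteratedDeriv 2 P 0 / 2 - deriv P 0 ^ 2 / 2) / 2 := by
    rw [← iteratedDeriv_two_sub_one_div_add_one isOpen_ball h0 hd hne hP0,
      iteratedDeriv_two_eq_two_smul_deriv_dslope isOpen_ball h0 hωd, smul_eq_mul]
    ring
  have hpick := norm_deriv_le_one_sub_sq_of_mapsTo_closedBall hgd hgmaps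
  rw [hg0, hg'0, norm_div, norm_div, Complex.norm_two] at hpick
  linarith

theorem ma_minda_refined_left_general (P : ℂ → ℂ) (hP : AnalyticOn ℂ P (ball 0 1))
    (hP0 : P 0 = 1) (hre : ∀ z ∈ ball (0 : ℂ) 1, 0 < (P z).re)
    (c₁ c₂ : ℂ) (hc₁ : c₁ = deriv P 0) (hc₂ : c₂ = iteratedDeriv 2 P 0 / 2)
    (v : ℝ) (hv : v ≤ 1 / 2) :
    ‖c₂ - (v : ℂ) * c₁ ^ 2‖ + v * ‖c₁‖ ^ 2 ≤ 2 := by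
  have hcar := norm_iteratedDeriv_two_div_two_sub_le_of_re_pos hP.differentiableOn hP0 hre
  rw [← hc₁, ← hc₂] at hcar
  have hsplit : c₂ - (v : ℂ) * c₁ ^ 2 = (c₂ - c₁ ^ 2 / 2) + ((1 / 2 - v : ℝ) : ℂ) * c₁ ^ 2 := by
    push_cast
    ring
  have hnorm : ‖((1 / 2 - v : ℝ) : ℂ) * c₁ ^ 2‖ = (1 / 2 - v) * ‖c₁‖ ^ 2 := by
    rw [norm_mul, norm_real, Real.norm_of_nonneg (by linarith), norm_pow]
  have htri := norm_add_le (c₂ - c₁ ^ 2 / 2) (((1 / 2 - v : ℝ) : ℂ) * c₁ ^ 2)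
  rw [← hsplit, hnorm] at htri
  linarith

theorem ma_minda_refined_left (P : ℂ → ℂ) (hP : AnalyticOn ℂ P (ball 0 1))
    (hP0 : P 0 = 1) (hre : ∀ z ∈ ball (0 : ℂ) 1, 0 < (P z).re)
    (c₁ c₂ : ℂ) (hc₁ : c₁ = deriv P 0) (hc₂ : c₂ = iteratedDeriv 2 P 0 / 2)
    (v : ℝ) (hv0 : 0 < v) (hv : v ≤ 1 / 2) :
    ‖c₂ - (v : ℂ) * c₁ ^ 2‖ + v * ‖c₁‖ ^ 2 ≤ 2 :=
  ma_minda_refined_left_general P hP hP0 hre c₁ c₂ hc₁ hc₂ v hv
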